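/- arXiv:2308.00625 — 6 statements merged into one kernel-verified Lean document; each statement's English description precedes it below -/
import Mathlib

section
/- Let l be a prime and let b1, b2 be nonzero squarefree integers. Suppose (z1, z2, z3) is an l-adic solution of the homogeneous space attached to (b1, b2). If v_l(z1) < 0 or v_l(z2) < 0, then v_l(z1) = v_l(z2) and this common value is negative. -/
/-!
The right-hand side `2^m·n²` of `b1·z1² − b2·z2² = 2^m·n²` is an `l`-adic integer, so as soon as one
of `b1·z1²`, `b2·z2²` is not integral, the ultrametric inequality forces the two to have the same
valuation. As `b1`, `b2` are squarefree, `v_l(b_i) ∈ {0, 1}`, and comparing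
`v_l(b1) + 2·v_l(z1) = v_l(b2) + 2·v_l(z2)` modulo `2` gives `v_l(z1) = v_l(z2)`.
-/

/-- A `K`-solution of the homogeneous space attached to the pair `(b1, b2)`:
a triple `(z1, z2, z3)` in `K^3` with `z1 ≠ 0`, `z2 ≠ 0`, satisfying
`b1·z1² − b2·z2² = 2^m·n²` and `b1·z1² − b1·b2·z3² = −2^m`. -/
def HSol (K : Type*) [Field K] (m n : ℕ) (b1 b2 : ℤ) (z1 z2 z3 : K) : Prop :=
  z1 ≠ 0 ∧ z2 ≠ 0 ∧
    (b1 : K) * z1 ^ 2 - (b2 : K) * z2 ^ 2 = 2 ^ m * (n : K) ^ 2 ∧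
    (b1 : K) * z1 ^ 2 - (b1 : K) * (b2 : K) * z3 ^ 2 = -(2 ^ m)

lemma padicValInt_le_one_of_squarefree {p : ℕ} (hp : p.Prime) {b : ℤ} (hb : Squarefree b) :
    padicValInt p b ≤ 1 := by
  have h := (Int.squarefree_natAbs.mpr hb).natFactorization_le_one p
  rwa [Nat.factorization_def _ hp] at h

namespace Padic

variable {p : ℕ} [Fact p.Prime]

lemma valuation_neg_iff_one_lt_norm (x : ℚ_[p]) : x.valuation < 0 ↔ 1 < ‖x‖ := by
  rw [← not_le, ← not_le, norm_le_one_iff_val_nonneg]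

lemma valuation_eq_of_norm_eq {x y : ℚ_[p]} (hx : x ≠ 0) (hy : y ≠ 0) (h : ‖x‖ = ‖y‖) :
    x.valuation = y.valuation := by
  rw [norm_eq_zpow_neg_valuation hx, norm_eq_zpow_neg_valuation hy] at h
  have hp : 1 < (p : ℝ) := mod_cast (Fact.out : p.Prime).one_lt
  exact neg_injective (zpow_right_injective₀ (by linarith) hp.ne' h)

lemma valuation_eq_of_valuation_sub_nonneg {x y : ℚ_[p]} (hx : x ≠ 0) (hy : y ≠ 0)
    (hxy : 0 ≤ (x - y).valuation) (h : x.valuation < 0 ∨ y.valuation < 0) :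
    x.valuation = y.valuation := by
  refine valuation_eq_of_norm_eq hx hy ?_
  rw [← norm_neg y]
  apply IsUltrametricDist.norm_eq_of_add_norm_lt_max
  rw [← sub_eq_add_neg, norm_neg, lt_max_iff]
  have := (norm_le_one_iff_val_nonneg _).mpr hxy
  rcases h with h | h <;> [left; right] <;> linarith [(valuation_neg_iff_one_lt_norm _).mp h]

lemma valuation_intCast_mul_sq {b : ℤ} (hb : b ≠ 0) {z : ℚ_[p]} (hz : z ≠ 0) :
    ((b : ℚ_[p]) * z ^ 2).valuation = padicValInt p b + 2 * z.valuation := by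
  rw [valuation_mul (Int.cast_ne_zero.mpr hb) (pow_ne_zero _ hz), valuation_intCast,
    valuation_pow]
  norm_num

end Padic

theorem stmt_0_general (m n : ℕ)
    (b1 b2 : ℤ)
    (hb1sf : Squarefree b1) (hb2sf : Squarefree b2)
    (l : ℕ) [Fact (Nat.Prime l)]
    (z1 z2 z3 : ℚ_[l]) (hsol : HSol ℚ_[l] m n b1 b2 z1 z2 z3)
    (hval : z1.valuation < 0 ∨ z2.valuation < 0) :
    z1.valuation = z2.valuation ∧ z1.valuation < 0 := by
  obtain ⟨hz1, hz2, hdiff, -⟩ := hsol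
  have hb1 := hb1sf.ne_zero
  have hb2 := hb2sf.ne_zero
  have hv1 := Padic.valuation_intCast_mul_sq hb1 hz1
  have hv2 := Padic.valuation_intCast_mul_sq hb2 hz2
  have hk1 := padicValInt_le_one_of_squarefree (p := l) Fact.out hb1sf
  have hk2 := padicValInt_le_one_of_squarefree (p := l) Fact.out hb2sf
  have hdiff_integral : 0 ≤ ((b1 : ℚ_[l]) * z1 ^ 2 - b2 * z2 ^ 2).valuation := by
    have hcast : (2 : ℚ_[l]) ^ m * (n : ℚ_[l]) ^ 2 = ((2 ^ m * n ^ 2 : ℕ) : ℚ_[l]) := by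
      push_cast; rfl
    rw [hdiff, hcast, Padic.valuation_natCast]
    exact Int.natCast_nonneg _
  have hveq := Padic.valuation_eq_of_valuation_sub_nonneg (by simp [hb1, hz1])
    (by simp [hb2, hz2]) hdiff_integral (by rw [hv1, hv2]; omega)
  rw [hv1, hv2] at hveq
  omega

theorem stmt_0 (m n q : ℕ) (hm : 0 < m) (hnpos : 0 < n) (hnodd : Odd n)
    (hnsf : Squarefree n) (hq : Nat.Prime q) (hqodd : Odd q)
    (hnq : n ^ 2 + 1 = 2 * q)
    (b1 b2 : ℤ) (hb1 : b1 ≠ 0) (hb2 : b2 ≠ 0)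
    (hb1sf : Squarefree b1) (hb2sf : Squarefree b2)
    (l : ℕ) [Fact (Nat.Prime l)]
    (z1 z2 z3 : ℚ_[l]) (hsol : HSol ℚ_[l] m n b1 b2 z1 z2 z3)
    (hval : z1.valuation < 0 ∨ z2.valuation < 0) :
    z1.valuation = z2.valuation ∧ z1.valuation < 0 :=
  stmt_0_general m n b1 b2 hb1sf hb2sf l z1 z2 z3 hsol hval
end

section
/- Let p be a prime dividing n, and let b1, b2 be nonzero squarefree integers all of whose prime factors lie in S = {2, q} ∪ {primes dividing n}, such that p^2 divides b1·b2. Suppose (z1, z2, z3) is a p-adic solution of the homogeneous space attached to (b1, b2) with z3 ≠ 0 and v_p(z3) < 0. Then either v_p(z3) = −1 and v_p(z1) = v_p(z2) = 0, or v_p(z3) = v_p(z1) and this common value is negative. -/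
/-! Here `v(b1) = v(b2) = v(n) = 1` and `v(2) = 0`. In `b1 z1² - b1 b2 z3² = -2^m` the two terms
have valuations `1 + 2 v(z1)` (odd) and `2 + 2 v(z3)` (even); being distinct, the smaller one
equals `v(2^m) = 0`, so `v(z3) = -1` and `v(z1) ≥ 0`. In `b1 z1² - b2 z2² = 2^m n²` both terms have
odd valuation while the right side has valuation `2`, so the two valuations agree and are at
most `2`; hence `v(z1) = v(z2) = 0`, and the first alternative always holds. -/

namespace Padic

variable {p : ℕ} [Fact p.Prime]

lemma valuation_neg (x : ℚ_[p]) : (-x).valuation = x.valuation := by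
  rcases eq_or_ne x 0 with rfl | hx
  · simp
  · have h : (-1 : ℚ_[p]).valuation = 0 := by
      simpa [padicValInt] using valuation_intCast (p := p) (-1)
    rw [neg_eq_neg_one_mul, valuation_mul (by norm_num) hx, h, zero_add]

lemma ne_zero_of_valuation_ne_zero {x : ℚ_[p]} (h : x.valuation ≠ 0) : x ≠ 0 := by
  rintro rfl
  exact h valuation_zero

lemma min_valuation_le_valuation_sub {x y : ℚ_[p]} (hxy : x - y ≠ 0) :
    min x.valuation y.valuation ≤ (x - y).valuation := by
  rw [sub_eq_add_neg] at hxy ⊢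
  simpa only [valuation_neg] using le_valuation_add hxy

lemma valuation_sub_eq_min_of_ne {x y : ℚ_[p]} (hx : x ≠ 0) (hy : y ≠ 0)
    (h : x.valuation ≠ y.valuation) : (x - y).valuation = min x.valuation y.valuation := by
  have hxy : x - y ≠ 0 := fun h0 => h (by rw [sub_eq_zero.mp h0])
  have h1 := min_valuation_le_valuation_sub hxy
  have h2 := min_valuation_le_valuation_sub (x := x) (y := x - y) (by simpa using hy)
  have h3 := min_valuation_le_valuation_sub (x := y) (y := y - x) (by simpa using hx)
  rw [sub_sub_cancel] at h2
  rw [sub_sub_cancel, ← neg_sub, valuation_neg] at h3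
  omega

lemma valuation_mul_sq {a z : ℚ_[p]} (ha : a ≠ 0) (hz : z ≠ 0) :
    (a * z ^ 2).valuation = a.valuation + 2 * z.valuation := by
  rw [valuation_mul ha (pow_ne_zero 2 hz), valuation_pow]
  norm_cast

end Padic

lemma padicValNat_eq_one_of_squarefree {p n : ℕ} [Fact p.Prime] (hn : Squarefree n)
    (hpn : p ∣ n) : padicValNat p n = 1 := by
  have hn0 : n ≠ 0 := hn.ne_zero
  refine le_antisymm ?_ (one_le_padicValNat_of_dvd hn0 hpn)
  by_contra! h
  have : p * p ∣ n := by
    rw [← sq, padicValNat_dvd_iff_le hn0]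
    omega
  exact (Fact.out : p.Prime).not_isUnit (hn p this)

lemma padicValInt_eq_one_of_squarefree {p : ℕ} [Fact p.Prime] {b : ℤ} (hb : Squarefree b)
    (hpb : (p : ℤ) ∣ b) : padicValInt p b = 1 :=
  padicValNat_eq_one_of_squarefree (Int.squarefree_natAbs.mpr hb) (Int.ofNat_dvd_left.mp hpb)

lemma Prime.dvd_of_sq_dvd_mul_of_squarefree {M : Type*} [CommMonoidWithZero M] [IsCancelMulZero M]
    {p a b : M} (hp : Prime p) (hb : Squarefree b) (h : p ^ 2 ∣ a * b) : p ∣ a := by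
  by_contra ha
  exact hp.not_isUnit (hb p (by rw [← sq]; exact hp.pow_dvd_of_dvd_mul_left 2 ha h))

section HomogeneousSpace

open Padic

variable {p : ℕ} [Fact p.Prime] {m n : ℕ} {b1 b2 : ℤ} {z1 z2 z3 : ℚ_[p]}

lemma HSol.valuation_z3_eq_neg_one_and_valuation_z1_nonneg
    (hsol : HSol ℚ_[p] m n b1 b2 z1 z2 z3)
    (hb1 : (b1 : ℚ_[p]).valuation = 1) (hb2 : (b2 : ℚ_[p]).valuation = 1)
    (h2 : (2 : ℚ_[p]).valuation = 0) (hv3 : z3.valuation < 0) :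
    z3.valuation = -1 ∧ 0 ≤ z1.valuation := by
  obtain ⟨hz1, -, -, heq⟩ := hsol
  have hb1' := ne_zero_of_valuation_ne_zero (hb1 ▸ one_ne_zero)
  have hb2' := ne_zero_of_valuation_ne_zero (hb2 ▸ one_ne_zero)
  have hz3 := ne_zero_of_valuation_ne_zero hv3.ne
  have hX := valuation_mul_sq hb1' hz1
  have hY := valuation_mul_sq (mul_ne_zero hb1' hb2') hz3
  rw [hb1] at hX
  rw [valuation_mul hb1' hb2', hb1, hb2] at hY
  have h := valuation_sub_eq_min_of_ne (mul_ne_zero hb1' (pow_ne_zero 2 hz1))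
    (mul_ne_zero (mul_ne_zero hb1' hb2') (pow_ne_zero 2 hz3)) (by omega)
  rw [heq, valuation_neg, valuation_pow, h2, mul_zero] at h
  omega

lemma HSol.valuation_z1_eq_zero_and_valuation_z2_eq_zero
    (hsol : HSol ℚ_[p] m n b1 b2 z1 z2 z3)
    (hb1 : (b1 : ℚ_[p]).valuation = 1) (hb2 : (b2 : ℚ_[p]).valuation = 1)
    (h2 : (2 : ℚ_[p]).valuation = 0) (hn : (n : ℚ_[p]).valuation = 1)
    (hv1 : 0 ≤ z1.valuation) :
    z1.valuation = 0 ∧ z2.valuation = 0 := by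
  obtain ⟨hz1, hz2, heq, -⟩ := hsol
  have hb1' := ne_zero_of_valuation_ne_zero (hb1 ▸ one_ne_zero)
  have hb2' := ne_zero_of_valuation_ne_zero (hb2 ▸ one_ne_zero)
  have hX := valuation_mul_sq hb1' hz1
  have hZ := valuation_mul_sq hb2' hz2
  rw [hb1] at hX
  rw [hb2] at hZ
  have hw : ((2 : ℚ_[p]) ^ m * (n : ℚ_[p]) ^ 2).valuation = 2 := by
    have hn' := ne_zero_of_valuation_ne_zero (hn ▸ one_ne_zero)
    rw [valuation_mul (pow_ne_zero m two_ne_zero) (pow_ne_zero 2 hn'), valuation_pow,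
      valuation_pow, h2, hn]
    norm_num
  have hsub := min_valuation_le_valuation_sub
    (heq ▸ ne_zero_of_valuation_ne_zero (hw ▸ two_ne_zero))
  rw [heq, hw] at hsub
  rcases eq_or_ne ((b1 : ℚ_[p]) * z1 ^ 2).valuation ((b2 : ℚ_[p]) * z2 ^ 2).valuation with h | h
  · omega
  · have := valuation_sub_eq_min_of_ne (mul_ne_zero hb1' (pow_ne_zero 2 hz1))
      (mul_ne_zero hb2' (pow_ne_zero 2 hz2)) h
    rw [heq, hw] at this
    omega

end HomogeneousSpace

theorem stmt_3_general (m n : ℕ) (hnodd : Odd n) (hnsf : Squarefree n)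
    (b1 b2 : ℤ) (hb1sf : Squarefree b1) (hb2sf : Squarefree b2)
    (p : ℕ) [Fact (Nat.Prime p)] (hpn : p ∣ n)
    (hp2 : (p : ℤ) ^ 2 ∣ b1 * b2)
    (z1 z2 z3 : ℚ_[p]) (hsol : HSol ℚ_[p] m n b1 b2 z1 z2 z3)
    (hv3 : z3.valuation < 0) :
    (z3.valuation = -1 ∧ z1.valuation = 0 ∧ z2.valuation = 0) ∨
      (z3.valuation = z1.valuation ∧ z3.valuation < 0) := by
  have hp : Prime (p : ℤ) := Nat.prime_iff_prime_int.mp Fact.out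
  have hb1 : (b1 : ℚ_[p]).valuation = 1 := by
    rw [Padic.valuation_intCast, padicValInt_eq_one_of_squarefree hb1sf
      (hp.dvd_of_sq_dvd_mul_of_squarefree hb2sf hp2), Nat.cast_one]
  have hb2 : (b2 : ℚ_[p]).valuation = 1 := by
    rw [Padic.valuation_intCast, padicValInt_eq_one_of_squarefree hb2sf
      (hp.dvd_of_sq_dvd_mul_of_squarefree hb1sf (mul_comm b1 b2 ▸ hp2)), Nat.cast_one]
  have hn : (n : ℚ_[p]).valuation = 1 := by
    rw [Padic.valuation_natCast, padicValNat_eq_one_of_squarefree hnsf hpn, Nat.cast_one]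
  have h2 : (2 : ℚ_[p]).valuation = 0 := by
    have hp_ndvd_two : ¬ p ∣ 2 := fun h => by
      have := (Nat.prime_dvd_prime_iff_eq Fact.out Nat.prime_two).mp h
      subst this
      exact Nat.not_even_iff_odd.mpr hnodd (even_iff_two_dvd.mpr hpn)
    rw [Padic.valuation_ofNat, padicValNat.eq_zero_of_not_dvd hp_ndvd_two, Nat.cast_zero]
  obtain ⟨hv3_eq, hv1⟩ := hsol.valuation_z3_eq_neg_one_and_valuation_z1_nonneg hb1 hb2 h2 hv3
  exact Or.inl ⟨hv3_eq, hsol.valuation_z1_eq_zero_and_valuation_z2_eq_zero hb1 hb2 h2 hn hv1⟩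

theorem stmt_3 (m n q : ℕ) (hm : 0 < m) (hnpos : 0 < n) (hnodd : Odd n)
    (hnsf : Squarefree n) (hq : Nat.Prime q) (hqodd : Odd q)
    (hnq : n ^ 2 + 1 = 2 * q)
    (b1 b2 : ℤ) (hb1 : b1 ≠ 0) (hb2 : b2 ≠ 0)
    (hb1sf : Squarefree b1) (hb2sf : Squarefree b2)
    (hb1S : ∀ r : ℕ, Nat.Prime r → (r : ℤ) ∣ b1 → r = 2 ∨ r = q ∨ r ∣ n)
    (hb2S : ∀ r : ℕ, Nat.Prime r → (r : ℤ) ∣ b2 → r = 2 ∨ r = q ∨ r ∣ n)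
    (p : ℕ) [Fact (Nat.Prime p)] (hpn : p ∣ n)
    (hp2 : (p : ℤ) ^ 2 ∣ b1 * b2)
    (z1 z2 z3 : ℚ_[p]) (hsol : HSol ℚ_[p] m n b1 b2 z1 z2 z3)
    (hz3 : z3 ≠ 0) (hv3 : z3.valuation < 0) :
    (z3.valuation = -1 ∧ z1.valuation = 0 ∧ z2.valuation = 0) ∨
      (z3.valuation = z1.valuation ∧ z3.valuation < 0) :=
  stmt_3_general m n hnodd hnsf b1 b2 hb1sf hb2sf p hpn hp2 z1 z2 z3 hsol hv3
end

section
/- Assume m is odd and let b be a positive divisor of n. If b is not congruent to 7 modulo 8, then neither the homogeneous space attached to (2b, b) nor the homogeneous space attached to (b, 2b) has a 2-adic solution; and if b is not congruent to 1 modulo 8, then the homogeneous space attached to (2b, 2b) has no 2-adic solution. -/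
/-!
Write `m = 2s + 1` and `t = 2^s`. Then `2^m = 2t²`, and the two equations of the homogeneous
space become homogeneous quadratic equations in `(z1, z2, z3, t)`. Dividing a 2-adic solution
by its coordinate of largest norm gives a solution in `ℤ_[2]` one of whose coordinates is `1`.
Reducing it modulo `16`, where every square is `0, 1, 4` or `9` and the odd `n` has `n² ∈ {1, 9}`,
a finite check excludes the stated residues of `b`. (Modulo `8` one cannot exclude `b ≡ 3` in
the first two cases, nor `b ≡ 5` in the third.)
-/

section HSolSq

variable {R S : Type*} [CommRing R] [CommRing S]

/-- The equations of `HSol` with `2^m` written as `2t²`, as linear equations in the squares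
`x_i = z_i²`, `y = t²` and `N = n²`. -/
def HSolSq (N b1 b2 x1 x2 x3 y : R) : Prop :=
  b1 * x1 - b2 * x2 = 2 * N * y ∧ b1 * x1 - b1 * b2 * x3 = -(2 * y)

variable {N b1 b2 x1 x2 x3 y : R}

theorem HSolSq.const_mul (c : R) (h : HSolSq N b1 b2 x1 x2 x3 y) :
    HSolSq N b1 b2 (c * x1) (c * x2) (c * x3) (c * y) :=
  ⟨by linear_combination c * h.1, by linear_combination c * h.2⟩

theorem HSolSq.map (f : R →+* S) (h : HSolSq N b1 b2 x1 x2 x3 y) :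
    HSolSq (f N) (f b1) (f b2) (f x1) (f x2) (f x3) (f y) :=
  ⟨by simpa [map_ofNat] using congrArg f h.1, by simpa [map_ofNat] using congrArg f h.2⟩

theorem HSolSq.of_map {f : R →+* S} (hf : Function.Injective f)
    (h : HSolSq (f N) (f b1) (f b2) (f x1) (f x2) (f x3) (f y)) :
    HSolSq N b1 b2 x1 x2 x3 y :=
  ⟨hf (by simpa [map_ofNat] using h.1), hf (by simpa [map_ofNat] using h.2)⟩

end HSolSq

theorem HSol.hSolSq {K : Type*} [Field K] {s n : ℕ} {b1 b2 : ℤ} {z1 z2 z3 : K}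
    (h : HSol K (2 * s + 1) n b1 b2 z1 z2 z3) :
    HSolSq ((n : K) ^ 2) b1 b2 (z1 ^ 2) (z2 ^ 2) (z3 ^ 2) (((2 : K) ^ s) ^ 2) :=
  ⟨by linear_combination h.2.2.1, by linear_combination h.2.2.2⟩

theorem exists_norm_inv_mul_le_one {ι K : Type*} [Finite ι] [NormedDivisionRing K] (x : ι → K)
    (hx : x ≠ 0) : ∃ i, x i ≠ 0 ∧ ∀ j, ‖(x i)⁻¹ * x j‖ ≤ 1 := by
  obtain ⟨j₀, hj₀⟩ := Function.ne_iff.mp hx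
  have : Nonempty ι := ⟨j₀⟩
  obtain ⟨i, hi⟩ := Finite.exists_max fun j => ‖x j‖
  have hxi : x i ≠ 0 := norm_pos_iff.mp ((norm_pos_iff.mpr hj₀).trans_le (hi j₀))
  refine ⟨i, hxi, fun j => ?_⟩
  rw [norm_mul, norm_inv, inv_mul_le_one₀ (norm_pos_iff.mpr hxi)]
  exact hi j

theorem Padic.exists_primitive_multiple {p : ℕ} [Fact p.Prime] {ι : Type*} [Finite ι]
    (x : ι → ℚ_[p]) (hx : x ≠ 0) :
    ∃ (c : ℚ_[p]) (w : ι → ℤ_[p]), (∀ j, (w j : ℚ_[p]) = c * x j) ∧ ∃ i, w i = 1 := by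
  obtain ⟨i, hxi, hle⟩ := exists_norm_inv_mul_le_one x hx
  refine ⟨(x i)⁻¹, fun j => ⟨_, hle j⟩, fun j => rfl, i, Subtype.ext (inv_mul_cancel₀ hxi)⟩

theorem not_exists_hSol_padic_of_zmod {p : ℕ} [Fact p.Prime] (k : ℕ) {m n : ℕ} (hm : Odd m)
    {b1 b2 : ℤ}
    (h : ∀ z1 z2 z3 t : ZMod (p ^ k), (z1 = 1 ∨ z2 = 1 ∨ z3 = 1 ∨ t = 1) →
      ¬ HSolSq ((n : ZMod (p ^ k)) ^ 2) b1 b2 (z1 ^ 2) (z2 ^ 2) (z3 ^ 2) (t ^ 2)) :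
    ¬ ∃ z1 z2 z3 : ℚ_[p], HSol ℚ_[p] m n b1 b2 z1 z2 z3 := by
  rintro ⟨z1, z2, z3, hsol⟩
  obtain ⟨s, rfl⟩ := hm
  obtain ⟨c, w, hw, i, hi⟩ :=
    Padic.exists_primitive_multiple ![z1, z2, z3, 2 ^ s] (fun h0 => hsol.1 (congrFun h0 0))
  have hℚ := hsol.hSolSq.const_mul (c ^ 2)
  have hℤ : HSolSq ((n : ℤ_[p]) ^ 2) b1 b2 (w 0 ^ 2) (w 1 ^ 2) (w 2 ^ 2) (w 3 ^ 2) := by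
    refine HSolSq.of_map (f := PadicInt.Coe.ringHom) Subtype.coe_injective ?_
    have hcoe (j) : PadicInt.Coe.ringHom (w j ^ 2) = c ^ 2 * ![z1, z2, z3, 2 ^ s] j ^ 2 := by
      rw [map_pow, ← mul_pow, ← hw j]
      rfl
    simpa [hcoe] using hℚ
  refine h _ _ _ _ ?_ (by simpa using hℤ.map (PadicInt.toZModPow k))
  fin_cases i <;> simp_all

def NoPrimitiveSqSolMod16 (b1 b2 : ZMod 16) : Prop :=
  ∀ ν ∈ ({1, 9} : Finset (ZMod 16)), ∀ x1 ∈ ({0, 1, 4, 9} : Finset (ZMod 16)),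
    ∀ x2 ∈ ({0, 1, 4, 9} : Finset (ZMod 16)), ∀ x3 ∈ ({0, 1, 4, 9} : Finset (ZMod 16)),
    ∀ y ∈ ({0, 1, 4, 9} : Finset (ZMod 16)),
    (x1 = 1 ∨ x2 = 1 ∨ x3 = 1 ∨ y = 1) → ¬ HSolSq ν b1 b2 x1 x2 x3 y

theorem NoPrimitiveSqSolMod16.not_hSolSq {b1 b2 : ZMod 16} (h : NoPrimitiveSqSolMod16 b1 b2)
    {n : ℕ} (hn : Odd n) (z1 z2 z3 t : ZMod 16) (h1 : z1 = 1 ∨ z2 = 1 ∨ z3 = 1 ∨ t = 1) :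
    ¬ HSolSq ((n : ZMod 16) ^ 2) b1 b2 (z1 ^ 2) (z2 ^ 2) (z3 ^ 2) (t ^ 2) := by
  have sq_mem : ∀ x : ZMod 16, x ^ 2 ∈ ({0, 1, 4, 9} : Finset (ZMod 16)) := by decide
  have odd_sq_mem : ∀ x : ZMod 16, x.val % 2 = 1 → x ^ 2 ∈ ({1, 9} : Finset (ZMod 16)) := by
    decide
  refine h _ (odd_sq_mem n ?_) _ (sq_mem z1) _ (sq_mem z2) _ (sq_mem z3) _ (sq_mem t) ?_
  · rw [ZMod.val_natCast]
    exact Nat.odd_iff.mp (hn.mod_even (by norm_num))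
  · rcases h1 with rfl | rfl | rfl | rfl <;> simp

set_option synthInstance.maxSize 1000 in
theorem noPrimitiveSqSolMod16_two_mul_left :
    ∀ β : ZMod 16, β.val % 2 = 1 → β.val % 8 ≠ 7 → NoPrimitiveSqSolMod16 (2 * β) β := by
  unfold NoPrimitiveSqSolMod16 HSolSq
  decide +kernel

set_option synthInstance.maxSize 1000 in
theorem noPrimitiveSqSolMod16_two_mul_right :
    ∀ β : ZMod 16, β.val % 2 = 1 → β.val % 8 ≠ 7 → NoPrimitiveSqSolMod16 β (2 * β) := by
  unfold NoPrimitiveSqSolMod16 HSolSq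
  decide +kernel

set_option synthInstance.maxSize 1000 in
theorem noPrimitiveSqSolMod16_two_mul_two_mul :
    ∀ β : ZMod 16, β.val % 2 = 1 → β.val % 8 ≠ 1 → NoPrimitiveSqSolMod16 (2 * β) (2 * β) := by
  unfold NoPrimitiveSqSolMod16 HSolSq
  decide +kernel

theorem stmt_7_general (m n : ℕ) (hmodd : Odd m)
    (hnodd : Odd n)
    (b : ℕ) (hbn : b ∣ n) :
    (b % 8 ≠ 7 →
      (¬ ∃ z1 z2 z3 : ℚ_[2], HSol ℚ_[2] m n (2 * b) b z1 z2 z3) ∧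
      (¬ ∃ z1 z2 z3 : ℚ_[2], HSol ℚ_[2] m n b (2 * b) z1 z2 z3)) ∧
    (b % 8 ≠ 1 →
      ¬ ∃ z1 z2 z3 : ℚ_[2], HSol ℚ_[2] m n (2 * b) (2 * b) z1 z2 z3) := by
  have hβ : (b : ZMod 16).val % 8 = b % 8 := by rw [ZMod.val_natCast]; omega
  have hβ_odd : (b : ZMod 16).val % 2 = 1 := by
    rw [ZMod.val_natCast]
    exact Nat.odd_iff.mp ((hnodd.of_dvd_nat hbn).mod_even (by norm_num))
  refine ⟨fun hb7 => ⟨?_, ?_⟩, fun hb1 => ?_⟩ <;>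
    refine not_exists_hSol_padic_of_zmod 4 hmodd (NoPrimitiveSqSolMod16.not_hSolSq ?_ hnodd) <;>
    push_cast
  · exact noPrimitiveSqSolMod16_two_mul_left _ hβ_odd (hβ ▸ hb7)
  · exact noPrimitiveSqSolMod16_two_mul_right _ hβ_odd (hβ ▸ hb7)
  · exact noPrimitiveSqSolMod16_two_mul_two_mul _ hβ_odd (hβ ▸ hb1)

theorem stmt_7 (m n q : ℕ) (hm : 0 < m) (hmodd : Odd m) (hnpos : 0 < n)
    (hnodd : Odd n) (hnsf : Squarefree n) (hq : Nat.Prime q) (hqodd : Odd q)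
    (hnq : n ^ 2 + 1 = 2 * q)
    (b : ℕ) (hbpos : 0 < b) (hbn : b ∣ n) :
    (b % 8 ≠ 7 →
      (¬ ∃ z1 z2 z3 : ℚ_[2], HSol ℚ_[2] m n (2 * b) b z1 z2 z3) ∧
      (¬ ∃ z1 z2 z3 : ℚ_[2], HSol ℚ_[2] m n b (2 * b) z1 z2 z3)) ∧
    (b % 8 ≠ 1 →
      ¬ ∃ z1 z2 z3 : ℚ_[2], HSol ℚ_[2] m n (2 * b) (2 * b) z1 z2 z3) :=
  stmt_7_general m n hmodd hnodd b hbn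
end

section
/- Assume m is even and positive, let b be a positive divisor of n, and let p be a prime dividing n with p ≡ 3 (mod 8) or p ≡ 5 (mod 8). Then the homogeneous space attached to (b, 2b) has no p-adic solution. -/
/-!
Since `p ≡ ±3 (mod 8)`, `2` is not a square mod `p`, so the form `x² - 2y²` is anisotropic
modulo `p` and hence `‖x² - 2y²‖ = max ‖x‖ ‖y‖ ^ 2` on `ℚ_[p]`. Writing `n = b c`, the first
equation becomes `z1² - 2 z2² = 2^m n c`, which has norm `< 1` because `p ∣ n`; so `‖z1‖ < 1`.
With `m = 2k` the second equation reads `(2^k)² - 2 (b z3)² = -b z1²`, whose left side has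
norm `≥ ‖2^k‖² = 1`, while `‖b z1²‖ ≤ ‖z1‖² < 1`.
-/

namespace PadicInt

variable {p : ℕ} [Fact p.Prime]

theorem isUnit_of_toZMod_ne_zero {x : ℤ_[p]} (hx : toZMod x ≠ 0) : IsUnit x := by
  by_contra h
  exact hx (by rw [← RingHom.mem_ker, ker_toZMod]; exact h)

theorem isUnit_one_sub_two_mul_sq (h2 : ¬IsSquare (2 : ZMod p)) (u : ℤ_[p]) :
    IsUnit (1 - 2 * u ^ 2) := by
  refine isUnit_of_toZMod_ne_zero fun h => h2 ?_
  rw [map_sub, map_one, map_mul, map_pow, map_ofNat, sub_eq_zero] at h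
  exact ⟨2 * toZMod u, by linear_combination 2 * h⟩

end PadicInt

namespace Padic

variable {p : ℕ} [Fact p.Prime]

theorem norm_two_eq_one_of_not_isSquare (h2 : ¬IsSquare (2 : ZMod p)) :
    ‖(2 : ℚ_[p])‖ = 1 := by
  have hp2 : p ≠ 2 := by rintro rfl; exact h2 ⟨0, rfl⟩
  exact_mod_cast norm_natCast_eq_one_iff.2 ((Nat.coprime_primes Fact.out Nat.prime_two).2 hp2)

theorem norm_one_sub_two_mul_sq (h2 : ¬IsSquare (2 : ZMod p)) {u : ℚ_[p]} (hu : ‖u‖ ≤ 1) :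
    ‖1 - 2 * u ^ 2‖ = 1 := by
  have := PadicInt.isUnit_iff.1 (PadicInt.isUnit_one_sub_two_mul_sq h2 ⟨u, hu⟩)
  rw [PadicInt.norm_def] at this
  push_cast at this
  exact this

theorem norm_sq_sub_two_mul_sq (h2 : ¬IsSquare (2 : ZMod p)) (x y : ℚ_[p]) :
    ‖x ^ 2 - 2 * y ^ 2‖ = max ‖x‖ ‖y‖ ^ 2 := by
  rcases le_or_gt ‖y‖ ‖x‖ with hyx | hxy
  · rcases eq_or_ne x 0 with rfl | hx
    · simp_all
    have hu : ‖y / x‖ ≤ 1 := by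
      rw [norm_div]; exact div_le_one_of_le₀ hyx (norm_nonneg x)
    calc ‖x ^ 2 - 2 * y ^ 2‖ = ‖x‖ ^ 2 * ‖1 - 2 * (y / x) ^ 2‖ := by
          rw [← norm_pow, ← norm_mul]; congr 1; field_simp
      _ = max ‖x‖ ‖y‖ ^ 2 := by rw [norm_one_sub_two_mul_sq h2 hu, mul_one, max_eq_left hyx]
  · have hlt : ‖x ^ 2‖ < ‖2 * y ^ 2‖ := by
      rw [norm_mul, norm_two_eq_one_of_not_isSquare h2, one_mul, norm_pow, norm_pow]
      exact pow_lt_pow_left₀ hxy (norm_nonneg x) two_ne_zero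
    rw [sub_eq_add_neg, add_eq_max_of_ne (by rw [norm_neg]; exact hlt.ne), norm_neg,
      max_eq_right hlt.le, norm_mul, norm_two_eq_one_of_not_isSquare h2,
      one_mul, norm_pow, max_eq_right hxy.le]

end Padic

theorem stmt_11_general (m n : ℕ) (hmeven : Even m)
    (b : ℕ) (hbpos : 0 < b) (hbn : b ∣ n)
    (p : ℕ) [Fact (Nat.Prime p)] (hpn : p ∣ n)
    (hp8 : p % 8 = 3 ∨ p % 8 = 5) :
    ¬ ∃ z1 z2 z3 : ℚ_[p], HSol ℚ_[p] m n b (2 * b) z1 z2 z3 := by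
  rintro ⟨z1, z2, z3, -, -, e1, e2⟩
  have h2 : ¬IsSquare (2 : ZMod p) := by
    rw [ZMod.exists_sq_eq_two_iff (by omega)]; omega
  obtain ⟨k, rfl⟩ := hmeven
  obtain ⟨c, rfl⟩ := hbn
  have hbc : ‖(b : ℚ_[p]) * c‖ < 1 := by exact_mod_cast Padic.norm_natCast_lt_one_iff.2 hpn
  have hb : (b : ℚ_[p]) ≠ 0 := by exact_mod_cast hbpos.ne'
  have h2k : ‖(2 : ℚ_[p]) ^ k‖ = 1 := by
    rw [norm_pow, Padic.norm_two_eq_one_of_not_isSquare h2, one_pow]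
  push_cast at e1 e2
  have hz1 : ‖z1‖ ^ 2 < 1 := by
    have e1' : z1 ^ 2 - 2 * z2 ^ 2 = (2 ^ k) ^ 2 * ((b : ℚ_[p]) * c) * c := by
      apply mul_left_cancel₀ hb; linear_combination e1
    calc ‖z1‖ ^ 2 ≤ max ‖z1‖ ‖z2‖ ^ 2 := by gcongr; exact le_max_left _ _
      _ = ‖(b : ℚ_[p]) * c‖ * ‖(c : ℚ_[p])‖ := by
        rw [← Padic.norm_sq_sub_two_mul_sq h2, e1', norm_mul, norm_mul, norm_pow, h2k, one_pow,
          one_mul]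
      _ < 1 := mul_lt_one_of_nonneg_of_lt_one_left (norm_nonneg _) hbc
          (IsUltrametricDist.norm_natCast_le_one ℚ_[p] c)
  have e2' : (2 ^ k) ^ 2 - 2 * ((b : ℚ_[p]) * z3) ^ 2 = -((b : ℚ_[p]) * z1 ^ 2) := by
    linear_combination e2
  have hbz1 : 1 ≤ ‖(b : ℚ_[p])‖ * ‖z1‖ ^ 2 := by
    rw [← norm_pow, ← norm_mul, ← norm_neg, ← e2', Padic.norm_sq_sub_two_mul_sq h2, h2k]
    exact one_le_pow₀ (le_max_left _ _)
  have hb1 : ‖(b : ℚ_[p])‖ ≤ 1 := IsUltrametricDist.norm_natCast_le_one ℚ_[p] b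
  exact ((mul_le_of_le_one_left (by positivity) hb1).trans_lt hz1).not_ge hbz1

theorem stmt_11 (m n q : ℕ) (hm : 0 < m) (hmeven : Even m) (hnpos : 0 < n)
    (hnodd : Odd n) (hnsf : Squarefree n) (hq : Nat.Prime q) (hqodd : Odd q)
    (hnq : n ^ 2 + 1 = 2 * q)
    (b : ℕ) (hbpos : 0 < b) (hbn : b ∣ n)
    (p : ℕ) [Fact (Nat.Prime p)] (hpn : p ∣ n)
    (hp8 : p % 8 = 3 ∨ p % 8 = 5) :
    ¬ ∃ z1 z2 z3 : ℚ_[p], HSol ℚ_[p] m n b (2 * b) z1 z2 z3 :=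
  stmt_11_general m n hmeven b hbpos hbn p hpn hp8
end

section
/- Assume m is even and positive, and let b be a positive divisor of n with b not congruent to 1 modulo 8 and not congruent to 7 modulo 8. Then the homogeneous space attached to (b, b) has no 2-adic solution. -/
theorem Padic.exists_primitive_integral_multiple {p : ℕ} [Fact p.Prime] {ι : Type*} [Finite ι]
    (v : ι → ℚ_[p]) (hv : v ≠ 0) :
    ∃ (c : ℚ_[p]) (X : ι → ℤ_[p]), (∀ i, (X i : ℚ_[p]) = c * v i) ∧ ∃ i, X i = 1 := by
  obtain ⟨j, hj⟩ := Function.ne_iff.mp hv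
  have : Nonempty ι := ⟨j⟩
  obtain ⟨i, hi⟩ := Finite.exists_max fun j => ‖v j‖
  have hvi : v i ≠ 0 := norm_pos_iff.mp ((norm_pos_iff.mpr hj).trans_le (hi j))
  refine ⟨(v i)⁻¹, fun j => ⟨(v i)⁻¹ * v j, ?_⟩, fun j => rfl, i, PadicInt.ext (inv_mul_cancel₀ hvi)⟩
  rw [norm_mul, norm_inv, inv_mul_le_one₀ (norm_pos_iff.mpr hvi)]
  exact hi j

theorem ZMod.natCast_sq_eq_one_eight_of_odd {n : ℕ} (hn : Odd n) : (n : ZMod 8) ^ 2 = 1 := by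
  have h : n % 8 = 1 ∨ n % 8 = 3 ∨ n % 8 = 5 ∨ n % 8 = 7 := by
    have := Nat.odd_iff.mp hn; omega
  rw [← ZMod.natCast_mod]
  rcases h with h | h | h | h <;> rw [h] <;> decide

theorem no_primitive_solution_mod_eight (B x₁ x₂ x₃ w : ZMod 8) (hB : B = 3 ∨ B = 5)
    (h₁ : B * x₁ ^ 2 - B * x₂ ^ 2 = w ^ 2) (h₂ : B * x₁ ^ 2 - x₃ ^ 2 = -w ^ 2) :
    ¬(x₁ = 1 ∨ x₂ = 1 ∨ x₃ = 1 ∨ w = 1) := by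
  rcases hB with rfl | rfl <;> revert x₁ x₂ x₃ w <;> decide

theorem PadicInt.no_primitive_solution_two {b n : ℕ} (hb : b % 8 = 3 ∨ b % 8 = 5) (hn : Odd n)
    (X : Fin 4 → ℤ_[2]) (h₁ : b * X 0 ^ 2 - b * X 1 ^ 2 = n ^ 2 * X 3 ^ 2)
    (h₂ : b * X 0 ^ 2 - X 2 ^ 2 = -X 3 ^ 2) (i : Fin 4) : X i ≠ 1 := by
  intro hi
  let φ : ℤ_[2] →+* ZMod 8 := PadicInt.toZModPow 3
  have hB : (b : ZMod 8) = 3 ∨ (b : ZMod 8) = 5 := by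
    rw [← ZMod.natCast_mod]; rcases hb with h | h <;> rw [h] <;> decide
  refine no_primitive_solution_mod_eight (b : ZMod 8) (φ (X 0)) (φ (X 1)) (φ (X 2)) (φ (X 3)) hB
    ?_ ?_ ?_
  · simpa [ZMod.natCast_sq_eq_one_eight_of_odd hn] using congrArg φ h₁
  · simpa using congrArg φ h₂
  · fin_cases i <;> simp only [Fin.zero_eta, Fin.mk_one, Fin.reduceFinMk] at hi <;> simp [hi]

theorem stmt_12_general (m n : ℕ) (hmeven : Even m)
    (hnodd : Odd n)
    (b : ℕ) (hbn : b ∣ n)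
    (hb1 : b % 8 ≠ 1) (hb7 : b % 8 ≠ 7) :
    ¬ ∃ z1 z2 z3 : ℚ_[2], HSol ℚ_[2] m n b b z1 z2 z3 := by
  rintro ⟨z1, z2, z3, -, -, e₁, e₂⟩
  obtain ⟨k, rfl⟩ := hmeven
  have hb : b % 8 = 3 ∨ b % 8 = 5 := by
    have := Nat.odd_iff.mp (hnodd.of_dvd_nat hbn); omega
  let v : Fin 4 → ℚ_[2] := ![z1, z2, b * z3, 2 ^ k]
  have hv : v ≠ 0 := fun h => pow_ne_zero k two_ne_zero (congrFun h 3)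
  obtain ⟨c, X, hX, i, hi⟩ := Padic.exists_primitive_integral_multiple v hv
  refine PadicInt.no_primitive_solution_two hb hnodd X ?_ ?_ i hi
  · refine PadicInt.ext ?_
    push_cast [hX]
    simp only [v, Matrix.cons_val]
    push_cast at e₁
    linear_combination c ^ 2 * e₁
  · refine PadicInt.ext ?_
    push_cast [hX]
    simp only [v, Matrix.cons_val]
    push_cast at e₂
    linear_combination c ^ 2 * e₂

theorem stmt_12 (m n q : ℕ) (hm : 0 < m) (hmeven : Even m) (hnpos : 0 < n)
    (hnodd : Odd n) (hnsf : Squarefree n) (hq : Nat.Prime q) (hqodd : Odd q)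
    (hnq : n ^ 2 + 1 = 2 * q)
    (b : ℕ) (hbpos : 0 < b) (hbn : b ∣ n)
    (hb1 : b % 8 ≠ 1) (hb7 : b % 8 ≠ 7) :
    ¬ ∃ z1 z2 z3 : ℚ_[2], HSol ℚ_[2] m n b b z1 z2 z3 :=
  stmt_12_general m n hmeven hnodd b hbn hb1 hb7
end

section
/- Assume m is even and positive, and let b be a positive divisor of n that is a quadratic non-residue modulo q (i.e., there is no integer x with x^2 ≡ b (mod q)). Then neither the homogeneous space attached to (b, b) nor the homogeneous space attached to (b, 2b) has a q-adic solution. -/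
theorem eq_zero_of_sq_sub_mul_sq_eq_zero {F : Type*} [Field F] {c : F} (hc : ¬IsSquare c)
    {x y : F} (h : x ^ 2 - c * y ^ 2 = 0) : x = 0 ∧ y = 0 := by
  by_cases hy : y = 0
  · subst hy
    exact ⟨pow_eq_zero_iff two_ne_zero |>.mp (by simpa using h), rfl⟩
  · exact (hc ⟨x / y, by field_simp; linear_combination -h⟩).elim

variable {p : ℕ} [Fact p.Prime]

namespace PadicInt

theorem toZMod_eq_zero_iff_norm_lt_one (x : ℤ_[p]) : toZMod x = 0 ↔ ‖x‖ < 1 := by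
  rw [← RingHom.mem_ker, ker_toZMod, IsLocalRing.mem_maximalIdeal, mem_nonunits]

theorem norm_sq_sub_mul_sq_eq_one {c : ℤ_[p]} (hc : ¬IsSquare (toZMod c)) {x y : ℤ_[p]}
    (hxy : ‖x‖ = 1 ∨ ‖y‖ = 1) : ‖x ^ 2 - c * y ^ 2‖ = 1 := by
  refine le_antisymm (norm_le_one _) (not_lt.mp fun h => ?_)
  have hred : toZMod x ^ 2 - toZMod c * toZMod y ^ 2 = 0 := by
    simpa using (toZMod_eq_zero_iff_norm_lt_one _).mpr h
  obtain ⟨hx, hy⟩ := eq_zero_of_sq_sub_mul_sq_eq_zero hc hred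
  rw [toZMod_eq_zero_iff_norm_lt_one] at hx hy
  rcases hxy with h1 | h1 <;> linarith

end PadicInt

namespace Padic

theorem norm_sq_sub_mul_sq_of_dominant {c : ℤ_[p]} (hc : ¬IsSquare (PadicInt.toZMod c))
    {x y w : ℚ_[p]} (hw : w ≠ 0) (hx : ‖x‖ ≤ ‖w‖) (hy : ‖y‖ ≤ ‖w‖)
    (hxy : ‖x‖ = ‖w‖ ∨ ‖y‖ = ‖w‖) : ‖x ^ 2 - c * y ^ 2‖ = ‖w‖ ^ 2 := by
  have hw' : 0 < ‖w‖ := norm_pos_iff.mpr hw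
  let x' : ℤ_[p] := ⟨x / w, by rw [norm_div]; exact div_le_one_of_le₀ hx hw'.le⟩
  let y' : ℤ_[p] := ⟨y / w, by rw [norm_div]; exact div_le_one_of_le₀ hy hw'.le⟩
  have hscale : x ^ 2 - c * y ^ 2 = w ^ 2 * ((x' ^ 2 - c * y' ^ 2 : ℤ_[p]) : ℚ_[p]) := by
    have hx' : (x' : ℚ_[p]) = x / w := rfl
    have hy' : (y' : ℚ_[p]) = y / w := rfl
    rw [PadicInt.coe_sub, PadicInt.coe_mul, PadicInt.coe_pow, PadicInt.coe_pow, hx', hy']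
    field_simp
  have hunit : ‖x'‖ = 1 ∨ ‖y'‖ = 1 := by
    simp only [x', y']
    rcases hxy with h | h <;> simp [h, hw'.ne']
  rw [hscale, norm_mul, norm_pow, PadicInt.padic_norm_e_of_padicInt,
    PadicInt.norm_sq_sub_mul_sq_eq_one hc hunit, mul_one]

theorem norm_sq_sub_mul_sq {c : ℤ_[p]} (hc : ¬IsSquare (PadicInt.toZMod c)) (x y : ℚ_[p]) :
    ‖x ^ 2 - c * y ^ 2‖ = max ‖x‖ ‖y‖ ^ 2 := by
  rcases le_total ‖y‖ ‖x‖ with h | h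
  · rw [max_eq_left h]
    by_cases hx : x = 0
    · simp_all
    · exact norm_sq_sub_mul_sq_of_dominant hc hx le_rfl h (.inl rfl)
  · rw [max_eq_right h]
    by_cases hy : y = 0
    · simp_all
    · exact norm_sq_sub_mul_sq_of_dominant hc hy h le_rfl (.inr rfl)

theorem norm_sq_ne_norm_p (w : ℚ_[p]) : ‖w‖ ^ 2 ≠ ‖(p : ℚ_[p])‖ := by
  have hp : (1 : ℝ) < p := by exact_mod_cast (Fact.out : p.Prime).one_lt
  by_cases hw : w = 0
  · simpa [hw, norm_p] using (zero_lt_one.trans hp).ne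
  · rw [norm_eq_zpow_neg_valuation hw, norm_p, ← zpow_natCast, ← zpow_mul, ← zpow_neg_one]
    intro h
    have := zpow_right_injective₀ (by positivity) hp.ne' h
    omega

theorem norm_intCast_eq_one_of_not_isSquare {k : ℤ} (hk : ¬IsSquare (k : ZMod p)) :
    ‖(k : ℚ_[p])‖ = 1 := by
  refine le_antisymm (norm_int_le_one k) (not_lt.mp fun h => hk ?_)
  rw [(ZMod.intCast_zmod_eq_zero_iff_dvd k p).mpr (norm_intCast_lt_one_iff.mp h)]
  exact ⟨0, by simp⟩

theorem norm_two_eq_one_of_odd (hp : Odd p) : ‖(2 : ℚ_[p])‖ = 1 := by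
  exact_mod_cast norm_natCast_eq_one_iff.mpr (Nat.coprime_two_right.mpr hp)

theorem not_hSol_of_not_isSquare {m n : ℕ} (hp : Odd p) (hnp : n ^ 2 + 1 = 2 * p)
    {b1 b2 : ℤ} (hb1 : ¬IsSquare (b1 : ZMod p)) (hb2 : ‖(b2 : ℚ_[p])‖ = 1)
    (z1 z2 z3 : ℚ_[p]) : ¬HSol ℚ_[p] m n b1 b2 z1 z2 z3 := by
  rintro ⟨-, -, h3, h4⟩
  have hnp' : (n : ℚ_[p]) ^ 2 + 1 = 2 * p := by exact_mod_cast hnp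
  have hdiff :
      (b2 : ℚ_[p]) * (z2 ^ 2 - ((b1 : ℤ_[p]) : ℚ_[p]) * z3 ^ 2) = -(2 ^ (m + 1) * p) := by
    push_cast
    linear_combination h4 - h3 - 2 ^ m * hnp'
  have hb1' : ¬IsSquare (PadicInt.toZMod (b1 : ℤ_[p])) := by rwa [map_intCast]
  apply_fun norm at hdiff
  rw [norm_mul, hb2, one_mul, norm_sq_sub_mul_sq hb1', norm_neg, norm_mul, norm_pow,
    norm_two_eq_one_of_odd hp, one_pow, one_mul] at hdiff
  rcases max_choice ‖z2‖ ‖z3‖ with h | h <;> rw [h] at hdiff <;> exact norm_sq_ne_norm_p _ hdiff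

end Padic

theorem stmt_13_general (m n q : ℕ) [hq : Fact (Nat.Prime q)]
    (hqodd : Odd q) (hnq : n ^ 2 + 1 = 2 * q)
    (b : ℕ)
    (hqnr : ¬ ∃ x : ℤ, x ^ 2 ≡ (b : ℤ) [ZMOD (q : ℤ)]) :
    (¬ ∃ z1 z2 z3 : ℚ_[q], HSol ℚ_[q] m n b b z1 z2 z3) ∧
    (¬ ∃ z1 z2 z3 : ℚ_[q], HSol ℚ_[q] m n b (2 * b) z1 z2 z3) := by
  have hb : ¬IsSquare ((b : ℤ) : ZMod q) := by
    rintro ⟨r, hr⟩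
    obtain ⟨x, rfl⟩ := ZMod.intCast_surjective r
    exact hqnr ⟨x, (ZMod.intCast_eq_intCast_iff _ _ _).mp (by push_cast at hr ⊢; rw [hr, sq])⟩
  have hb_norm := Padic.norm_intCast_eq_one_of_not_isSquare hb
  have h2b_norm : ‖((2 * b : ℤ) : ℚ_[q])‖ = 1 := by
    rw [Int.cast_mul, norm_mul, Int.cast_ofNat, Padic.norm_two_eq_one_of_odd hqodd, hb_norm,
      one_mul]
  exact ⟨fun ⟨z1, z2, z3, h⟩ => Padic.not_hSol_of_not_isSquare hqodd hnq hb hb_norm z1 z2 z3 h,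
    fun ⟨z1, z2, z3, h⟩ => Padic.not_hSol_of_not_isSquare hqodd hnq hb h2b_norm z1 z2 z3 h⟩

theorem stmt_13 (m n q : ℕ) (hm : 0 < m) (hmeven : Even m) (hnpos : 0 < n)
    (hnodd : Odd n) (hnsf : Squarefree n) [hq : Fact (Nat.Prime q)]
    (hqodd : Odd q) (hnq : n ^ 2 + 1 = 2 * q)
    (b : ℕ) (hbpos : 0 < b) (hbn : b ∣ n)
    (hqnr : ¬ ∃ x : ℤ, x ^ 2 ≡ (b : ℤ) [ZMOD (q : ℤ)]) :
    (¬ ∃ z1 z2 z3 : ℚ_[q], HSol ℚ_[q] m n b b z1 z2 z3) ∧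
    (¬ ∃ z1 z2 z3 : ℚ_[q], HSol ℚ_[q] m n b (2 * b) z1 z2 z3) :=
  stmt_13_general m n q (hq := hq) hqodd hnq b hqnr
end
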